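/- arXiv:2104.12551 — 3 statements merged into one kernel-verified Lean document; each statement's English description precedes it below -/
import Mathlib

section
/- For a Zinbiel algebra Z with bimodule V, the composition d³ ∘ d² of the Zinbiel coboundary operators is zero: for any bilinear map ω : Z×Z → V, d³(d²ω) = 0. -/
/-!
Expand `d³(d²ω)(x,y,z,t)` by bilinearity. Every resulting term contains, besides `ω`, exactly two
of the operations `·`, `▹`, `◃`. The terms in which both are products inside the arguments of `ω`
add up to `ω((x·y)·z − x·(y∘z), t) + ω(x, (y∘z)∘t − y∘(z∘t))` with `a∘b = a·b + b·a`; this vanishes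
by the Zinbiel identity and the associativity of `∘` that it implies. The terms with one product
inside `ω` and one action outside cancel in pairs. The remaining terms, in which `ω(x,y)`,
`ω(y,z) + ω(z,y)` or `ω(z,t) + ω(t,z)` is acted on twice, cancel by one instance of each of the
three bimodule axioms.
-/

/-- The second Zinbiel coboundary:
`(d²ω)(x,y,z) = x▹(ω(y,z)+ω(z,y)) − ω(x·y,z) + ω(x, y·z+z·y) − ω(x,y)◃z`. -/
def d2 {K Z V : Type*} [Field K] [AddCommGroup Z] [Module K Z]
    [AddCommGroup V] [Module K V]
    (m : Z →ₗ[K] Z →ₗ[K] Z) (r : Z →ₗ[K] V →ₗ[K] V) (l : V →ₗ[K] Z →ₗ[K] V)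
    (ω : Z →ₗ[K] Z →ₗ[K] V) (x y z : Z) : V :=
  r x (ω y z + ω z y) - ω (m x y) z + ω x (m y z + m z y) - l (ω x y) z

theorem zinbiel_anticomm_assoc {R Z : Type*} [CommSemiring R] [AddCommMonoid Z] [Module R Z]
    (m : Z →ₗ[R] Z →ₗ[R] Z) (hz : ∀ x y z : Z, m (m x y) z = m x (m y z) + m x (m z y))
    (x y z : Z) :
    m (m x y + m y x) z + m z (m x y + m y x) = m x (m y z + m z y) + m (m y z + m z y) x := by
  simp only [map_add, LinearMap.add_apply, hz]
  abel

/-- For a Zinbiel algebra `Z` with bimodule `V`, `d³ ∘ d² = 0`: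
for every bilinear map `ω : Z × Z → V` and all `x y z t`, `(d³(d²ω))(x,y,z,t) = 0`. -/
theorem zinbiel_d3_d2_eq_zero {K Z V : Type*} [Field K]
    [AddCommGroup Z] [Module K Z] [AddCommGroup V] [Module K V]
    (m : Z →ₗ[K] Z →ₗ[K] Z)
    (hz : ∀ x y z : Z, m (m x y) z = m x (m y z) + m x (m z y))
    (r : Z →ₗ[K] V →ₗ[K] V) (l : V →ₗ[K] Z →ₗ[K] V)
    (hb1 : ∀ (x y : Z) (v : V), r (m x y) v = r x (r y v + l v y))
    (hb2 : ∀ (x y : Z) (v : V), l (l v x) y = l v (m x y + m y x))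
    (hb3 : ∀ (x y : Z) (v : V), l (r x v) y = r x (l v y + r y v))
    (ω : Z →ₗ[K] Z →ₗ[K] V) :
    ∀ x y z t : Z,
      r x (d2 m r l ω y z t - d2 m r l ω z t y + d2 m r l ω z y t - d2 m r l ω t z y)
        - d2 m r l ω (m x y) z t + d2 m r l ω x (m y z + m z y) t
        - d2 m r l ω x y (m z t + m t z) + l (d2 m r l ω x y z) t = 0 := by
  intro x y z t
  linear_combination (norm := skip)
    congrArg (ω · t) (hz x y z) + congrArg (ω x) (zinbiel_anticomm_assoc m hz y z t)
      - hb1 x y (ω z t + ω t z) - hb2 z t (ω x y) + hb3 x t (ω y z + ω z y)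
  simp only [d2, map_add, map_sub, LinearMap.add_apply, LinearMap.sub_apply]
  abel
end

section
/- A strict 2-term Z∞-algebra (one with l₃ = 0) gives rise to a crossed module of Zinbiel algebras: V₀ is a Zinbiel algebra with x·y = l₂(x,y), V₁ is a Zinbiel algebra with h·k = l₂(dh, k), d : V₁ → V₀ is a Zinbiel homomorphism, and the actions x▹h = l₂(x,h), h◃x = l₂(h,x) satisfy the crossed module compatibility conditions d(x▹h) = x·d(h), d(h◃x) = d(h)·x, and d(h)▹k = h·k = h◃d(k). -/
section Zinbiel

variable {R M : Type*} [CommRing R] [AddCommGroup M] [Module R M]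

def IsZinbiel (μ : M →ₗ[R] M →ₗ[R] M) : Prop :=
  ∀ x y z, μ (μ x y) z = μ x (μ y z) + μ x (μ z y)

variable {V₀ V₁ : Type*} [AddCommGroup V₀] [Module R V₀] [AddCommGroup V₁] [Module R V₁]

/-- Axiom (e1) at `x = dh`, `y = dk` is the Zinbiel identity of `h·k := l₂(dh, k)`, after
rewriting `l₂(g, dk)` as `l₂(dg, k)` by (c) and `d(l₂(dh, k))` by (b1). -/
theorem isZinbiel_comp (d : V₁ →ₗ[R] V₀) (a : V₀ →ₗ[R] V₀ →ₗ[R] V₀)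
    (b : V₀ →ₗ[R] V₁ →ₗ[R] V₁) (c : V₁ →ₗ[R] V₀ →ₗ[R] V₁)
    (hb1 : ∀ x h, d (b x h) = a x (d h)) (hc : ∀ h k, b (d h) k = c h (d k))
    (he1 : ∀ x y h, (0 : V₁) = b (a x y) h - b x (b y h) - b x (c h y)) :
    IsZinbiel (b.comp d) := by
  intro h k g
  have e1 := he1 (d h) (d k) g
  rw [← hc g k] at e1
  simp only [LinearMap.comp_apply, hb1]
  linear_combination (norm := abel) -e1

end Zinbiel

/-- `a`, `b`, `c` are the components of `l₂` on `V₀×V₀`, `V₀×V₁`, `V₁×V₀`; the `V₁×V₁`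
component vanishes by axiom (a). -/
theorem strict_two_term_Zinfty_gives_crossed_module_general {K V₀ V₁ : Type*} [Field K]
    [AddCommGroup V₀] [Module K V₀] [AddCommGroup V₁] [Module K V₁]
    (d : V₁ →ₗ[K] V₀)
    (a : V₀ →ₗ[K] V₀ →ₗ[K] V₀) (b : V₀ →ₗ[K] V₁ →ₗ[K] V₁) (c : V₁ →ₗ[K] V₀ →ₗ[K] V₁)
    -- axioms (b1), (b2), (c)
    (hb1 : ∀ (x : V₀) (h : V₁), d (b x h) = a x (d h))
    (hb2 : ∀ (x : V₀) (h : V₁), d (c h x) = a (d h) x)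
    (hc : ∀ h k : V₁, b (d h) k = c h (d k))
    -- axiom (d) with `l₃ = 0`
    (hax_d : ∀ x y z : V₀, (0 : V₀) = a x (a y z) + a x (a z y) - a (a x y) z)
    -- axioms (e1), (e2), (e3) with `l₃ = 0`
    (he1 : ∀ (x y : V₀) (h : V₁), (0 : V₁) = b (a x y) h - b x (b y h) - b x (c h y)) :
    -- `V₀` is a Zinbiel algebra
    (∀ x y z : V₀, a (a x y) z = a x (a y z) + a x (a z y)) ∧
    -- `V₁` is a Zinbiel algebra with `h·k := l₂(dh,k)`
    (∀ h k g : V₁, b (d (b (d h) k)) g =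
        b (d h) (b (d k) g) + b (d h) (b (d g) k)) ∧
    -- `d` is a Zinbiel algebra homomorphism
    (∀ h k : V₁, d (b (d h) k) = a (d h) (d k)) ∧
    -- crossed module compatibility conditions
    (∀ (x : V₀) (h : V₁), d (b x h) = a x (d h)) ∧
    (∀ (x : V₀) (h : V₁), d (c h x) = a (d h) x) ∧
    (∀ h k : V₁, b (d h) k = c h (d k)) :=
  ⟨fun x y z => (sub_eq_zero.mp (hax_d x y z).symm).symm,
    isZinbiel_comp d a b c hb1 hc he1, fun h k => hb1 (d h) k, hb1, hb2, hc⟩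

/-- A strict 2-term Z∞-algebra (one with `l₃ = 0`) gives a crossed module of Zinbiel
algebras: `V₀` is Zinbiel with `x·y = l₂(x,y)`, `V₁` is Zinbiel with `h·k = l₂(dh,k)`,
`d` is a Zinbiel homomorphism, and the actions `x▹h = l₂(x,h)`, `h◃x = l₂(h,x)` satisfy
the crossed module compatibility conditions. Here `a`, `b`, `c` denote the components
of `l₂` on `V₀×V₀`, `V₀×V₁`, `V₁×V₀` respectively (the `V₁×V₁` component is `0` by
axiom (a)), and strictness `l₃ = 0` is substituted into axioms (d), (e1)–(e3). -/
theorem strict_two_term_Zinfty_gives_crossed_module {K V₀ V₁ : Type*} [Field K]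
    [AddCommGroup V₀] [Module K V₀] [AddCommGroup V₁] [Module K V₁]
    (d : V₁ →ₗ[K] V₀)
    (a : V₀ →ₗ[K] V₀ →ₗ[K] V₀) (b : V₀ →ₗ[K] V₁ →ₗ[K] V₁) (c : V₁ →ₗ[K] V₀ →ₗ[K] V₁)
    -- axioms (b1), (b2), (c)
    (hb1 : ∀ (x : V₀) (h : V₁), d (b x h) = a x (d h))
    (hb2 : ∀ (x : V₀) (h : V₁), d (c h x) = a (d h) x)
    (hc : ∀ h k : V₁, b (d h) k = c h (d k))
    -- axiom (d) with `l₃ = 0`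
    (hax_d : ∀ x y z : V₀, (0 : V₀) = a x (a y z) + a x (a z y) - a (a x y) z)
    -- axioms (e1), (e2), (e3) with `l₃ = 0`
    (he1 : ∀ (x y : V₀) (h : V₁), (0 : V₁) = b (a x y) h - b x (b y h) - b x (c h y))
    (he2 : ∀ (x z : V₀) (h : V₁), (0 : V₁) = c (b x h) z - b x (c h z) - b x (b z h))
    (he3 : ∀ (y z : V₀) (h : V₁), (0 : V₁) = c (c h y) z - c h (a y z) - c h (a z y)) :
    -- `V₀` is a Zinbiel algebra
    (∀ x y z : V₀, a (a x y) z = a x (a y z) + a x (a z y)) ∧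
    -- `V₁` is a Zinbiel algebra with `h·k := l₂(dh,k)`
    (∀ h k g : V₁, b (d (b (d h) k)) g =
        b (d h) (b (d k) g) + b (d h) (b (d g) k)) ∧
    -- `d` is a Zinbiel algebra homomorphism
    (∀ h k : V₁, d (b (d h) k) = a (d h) (d k)) ∧
    -- crossed module compatibility conditions
    (∀ (x : V₀) (h : V₁), d (b x h) = a x (d h)) ∧
    (∀ (x : V₀) (h : V₁), d (c h x) = a (d h) x) ∧
    (∀ h k : V₁, b (d h) k = c h (d k)) :=
  strict_two_term_Zinfty_gives_crossed_module_general d a b c hb1 hb2 hc hax_d he1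
end

section
/- In a skeletal 2-term Z∞-algebra (d = 0), the actions x▹h := l₂(x,h) and h◃x := l₂(h,x) make V₁ a bimodule over the Zinbiel algebra V₀, and l₃ is a 3-cocycle: d³(l₃) = 0, i.e., x▹(l₃(y,z,t) − l₃(z,t,y) + l₃(z,y,t) − l₃(t,z,y)) − l₃(x·y,z,t) + l₃(x, y·z + z·y, t) − l₃(x, y, z·t + t·z) + l₃(x,y,z)◃t = 0. -/
/-!
With `d = 0` every term of axioms (e1)–(e3) containing `l₃ (d h)` vanishes, and what is left is
exactly one bimodule axiom each. Axiom (f) contains no `d` at all: it is the equation `d³ l₃ = 0`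
with its terms rearranged.
-/

theorem eq_add_of_zero_eq_sub_sub {G : Type*} [AddCommGroup G] {u v w : G} (h : 0 = u - v - w) :
    u = v + w :=
  sub_eq_zero.mp ((sub_sub u v w).symm.trans h.symm)

section Zinbiel

variable {K V₀ V₁ : Type*} [CommRing K] [AddCommGroup V₀] [Module K V₀] [AddCommGroup V₁]
  [Module K V₁] (a : V₀ →ₗ[K] V₀ →ₗ[K] V₀) (b : V₀ →ₗ[K] V₁ →ₗ[K] V₁)
  (c : V₁ →ₗ[K] V₀ →ₗ[K] V₁) (l₃ : V₀ →ₗ[K] V₀ →ₗ[K] V₀ →ₗ[K] V₁)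

/-- `V₁` is a bimodule over the Zinbiel algebra `(V₀, a)` with `x ▹ h = b x h`, `h ◃ x = c h x`. -/
def IsZinbielBimodule : Prop :=
  (∀ (x y : V₀) (h : V₁), b (a x y) h = b x (b y h + c h y)) ∧
  (∀ (x y : V₀) (h : V₁), c (c h x) y = c h (a x y + a y x)) ∧
  (∀ (x y : V₀) (h : V₁), c (b x h) y = b x (c h y + b y h))

def zinbielCoboundary₃ (x y z t : V₀) : V₁ :=
  b x (l₃ y z t - l₃ z t y + l₃ z y t - l₃ t z y)
    - l₃ (a x y) z t + l₃ x (a y z + a z y) t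
    - l₃ x y (a z t + a t z) + c (l₃ x y z) t

theorem isZinbielBimodule_of_skeletal (d : V₁ →ₗ[K] V₀) (hd : d = 0)
    (he1 : ∀ (x y : V₀) (h : V₁),
      l₃ x y (d h) = b (a x y) h - b x (b y h) - b x (c h y))
    (he2 : ∀ (x z : V₀) (h : V₁),
      l₃ x (d h) z = c (b x h) z - b x (c h z) - b x (b z h))
    (he3 : ∀ (y z : V₀) (h : V₁),
      l₃ (d h) y z = c (c h y) z - c h (a y z) - c h (a z y)) :
    IsZinbielBimodule a b c := by
  subst hd
  refine ⟨fun x y h => ?_, fun x y h => ?_, fun x y h => ?_⟩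
  · rw [map_add]
    exact eq_add_of_zero_eq_sub_sub (by simpa using he1 x y h)
  · rw [map_add]
    exact eq_add_of_zero_eq_sub_sub (by simpa using he3 x y h)
  · rw [map_add]
    exact eq_add_of_zero_eq_sub_sub (by simpa using he2 x y h)

theorem zinbielCoboundary₃_eq (x y z t : V₀) :
    zinbielCoboundary₃ a b c l₃ x y z t =
      b x (l₃ y z t) + b x (l₃ z y t) + l₃ x (a y z + a z y) t + c (l₃ x y z) t
        - b x (l₃ z t y) - b x (l₃ t z y) - l₃ x y (a z t + a t z)
        - l₃ (a x y) z t := by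
  simp only [zinbielCoboundary₃, map_add, map_sub]
  abel

end Zinbiel

theorem skeletal_two_term_Zinfty_bimodule_and_cocycle_general {K V₀ V₁ : Type*} [Field K]
    [AddCommGroup V₀] [Module K V₀] [AddCommGroup V₁] [Module K V₁]
    (d : V₁ →ₗ[K] V₀)
    (a : V₀ →ₗ[K] V₀ →ₗ[K] V₀) (b : V₀ →ₗ[K] V₁ →ₗ[K] V₁) (c : V₁ →ₗ[K] V₀ →ₗ[K] V₁)
    (l₃ : V₀ →ₗ[K] V₀ →ₗ[K] V₀ →ₗ[K] V₁)
    (hskel : d = 0)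
    -- axioms (e1), (e2), (e3)
    (he1 : ∀ (x y : V₀) (h : V₁),
      l₃ x y (d h) = b (a x y) h - b x (b y h) - b x (c h y))
    (he2 : ∀ (x z : V₀) (h : V₁),
      l₃ x (d h) z = c (b x h) z - b x (c h z) - b x (b z h))
    (he3 : ∀ (y z : V₀) (h : V₁),
      l₃ (d h) y z = c (c h y) z - c h (a y z) - c h (a z y))
    -- axiom (f)
    (hf : ∀ x y z t : V₀,
      b x (l₃ y z t) + b x (l₃ z y t) + l₃ x (a y z + a z y) t + c (l₃ x y z) t
        - b x (l₃ z t y) - b x (l₃ t z y) - l₃ x y (a z t + a t z)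
        - l₃ (a x y) z t = 0) :
    -- the bimodule axioms for `▹ = b`, `◃ = c` over `(V₀, a)`
    (∀ (x y : V₀) (h : V₁), b (a x y) h = b x (b y h + c h y)) ∧
    (∀ (x y : V₀) (h : V₁), c (c h x) y = c h (a x y + a y x)) ∧
    (∀ (x y : V₀) (h : V₁), c (b x h) y = b x (c h y + b y h)) ∧
    -- `l₃` is a 3-cocycle: `d³(l₃) = 0`
    (∀ x y z t : V₀,
      b x (l₃ y z t - l₃ z t y + l₃ z y t - l₃ t z y)
        - l₃ (a x y) z t + l₃ x (a y z + a z y) t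
        - l₃ x y (a z t + a t z) + c (l₃ x y z) t = 0) := by
  obtain ⟨hleft, hright, hmiddle⟩ :=
    isZinbielBimodule_of_skeletal a b c l₃ d hskel he1 he2 he3
  exact ⟨hleft, hright, hmiddle,
    fun x y z t => (zinbielCoboundary₃_eq a b c l₃ x y z t).trans (hf x y z t)⟩

/-- In a skeletal 2-term Z∞-algebra (`d = 0`), the actions `x▹h := l₂(x,h)` and
`h◃x := l₂(h,x)` make `V₁` a bimodule over the Zinbiel algebra `V₀`, and `l₃` is a
3-cocycle: `d³(l₃) = 0`. Here `a`, `b`, `c` denote the components of `l₂` on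
`V₀×V₀`, `V₀×V₁`, `V₁×V₀`, and the hypotheses are the axioms (d), (e1)–(e3), (f)
of a 2-term Z∞-algebra together with skeletality `d = 0`. -/
theorem skeletal_two_term_Zinfty_bimodule_and_cocycle {K V₀ V₁ : Type*} [Field K]
    [AddCommGroup V₀] [Module K V₀] [AddCommGroup V₁] [Module K V₁]
    (d : V₁ →ₗ[K] V₀)
    (a : V₀ →ₗ[K] V₀ →ₗ[K] V₀) (b : V₀ →ₗ[K] V₁ →ₗ[K] V₁) (c : V₁ →ₗ[K] V₀ →ₗ[K] V₁)
    (l₃ : V₀ →ₗ[K] V₀ →ₗ[K] V₀ →ₗ[K] V₁)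
    (hskel : d = 0)
    -- axiom (d)
    (hax_d : ∀ x y z : V₀, d (l₃ x y z) = a x (a y z) + a x (a z y) - a (a x y) z)
    -- axioms (e1), (e2), (e3)
    (he1 : ∀ (x y : V₀) (h : V₁),
      l₃ x y (d h) = b (a x y) h - b x (b y h) - b x (c h y))
    (he2 : ∀ (x z : V₀) (h : V₁),
      l₃ x (d h) z = c (b x h) z - b x (c h z) - b x (b z h))
    (he3 : ∀ (y z : V₀) (h : V₁),
      l₃ (d h) y z = c (c h y) z - c h (a y z) - c h (a z y))
    -- axiom (f)
    (hf : ∀ x y z t : V₀,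
      b x (l₃ y z t) + b x (l₃ z y t) + l₃ x (a y z + a z y) t + c (l₃ x y z) t
        - b x (l₃ z t y) - b x (l₃ t z y) - l₃ x y (a z t + a t z)
        - l₃ (a x y) z t = 0) :
    -- the bimodule axioms for `▹ = b`, `◃ = c` over `(V₀, a)`
    (∀ (x y : V₀) (h : V₁), b (a x y) h = b x (b y h + c h y)) ∧
    (∀ (x y : V₀) (h : V₁), c (c h x) y = c h (a x y + a y x)) ∧
    (∀ (x y : V₀) (h : V₁), c (b x h) y = b x (c h y + b y h)) ∧
    -- `l₃` is a 3-cocycle: `d³(l₃) = 0`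
    (∀ x y z t : V₀,
      b x (l₃ y z t - l₃ z t y + l₃ z y t - l₃ t z y)
        - l₃ (a x y) z t + l₃ x (a y z + a z y) t
        - l₃ x y (a z t + a t z) + c (l₃ x y z) t = 0) :=
  skeletal_two_term_Zinfty_bimodule_and_cocycle_general d a b c l₃ hskel he1 he2 he3 hf
end
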